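/- arXiv:2005.12984 — 2 statements merged into one kernel-verified Lean document; each statement's English description precedes it below -/
import Mathlib

section
/- The function s ↦ −2γ_e − 2ψ(s/2) − π·cot(πs/4) extends to an analytic function W on the strip {s ∈ ℂ : −2 < Re s < 4} (its singularity at s = 0 is removable), and this extension satisfies W(0) = 0 and W(2) = 0. -/
open Complex MeasureTheory Set Filter

/-- The digamma function `ψ = Γ'/Γ`. -/
noncomputable def digamma (z : ℂ) : ℂ := deriv Complex.Gamma z / Complex.Gamma z

/-- The raw formula for the function `W`:
`W(s) = −2γ_e − 2ψ(s/2) − π·cot(πs/4)`. -/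
noncomputable def Wfun (s : ℂ) : ℂ :=
  -2 * (Real.eulerMascheroniConstant : ℂ) - 2 * _root_.digamma (s / 2)
    - (Real.pi : ℂ) * Complex.cot ((Real.pi : ℂ) * s / 4)

/-!
Writing `z = s / 4`, the Legendre duplication formula gives
`2ψ(s/2) = ψ(z) + ψ(z + 1/2) + 2 log 2` and the reflection formula gives
`π cot(π z) = ψ(1 - z) - ψ(z)`, so `ψ(z)` cancels and
`W(s) = -2γ - 2 log 2 - ψ(s/4 + 1/2) - ψ(1 - s/4)`.
Both arguments have positive real part exactly on the strip `-2 < Re s < 4`, so the right-hand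
side is analytic there; its values at `0` and `2` follow from `ψ(1) = -γ` and
`ψ(1/2) = -γ - 2 log 2`.
-/

theorem logDeriv_comp_apply {𝕜 𝕜' : Type*} [NontriviallyNormedField 𝕜]
    [NontriviallyNormedField 𝕜'] [NormedAlgebra 𝕜 𝕜'] {f : 𝕜' → 𝕜'} {g : 𝕜 → 𝕜'} {x : 𝕜}
    (hf : DifferentiableAt 𝕜' f (g x)) (hg : DifferentiableAt 𝕜 g x) :
    logDeriv (fun y => f (g y)) x = logDeriv f (g x) * deriv g x :=
  logDeriv_comp hf hg

namespace Complex

open scoped Real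

-- Here `digamma` resolves to Mathlib's `Complex.digamma`, not to the root `digamma` above.

theorem analyticAt_Gamma {z : ℂ} (hz : Gamma z ≠ 0) : AnalyticAt ℂ Gamma z := by
  have h := (differentiable_one_div_Gamma.analyticAt z).inv (inv_ne_zero hz)
  simpa only [Pi.inv_def, inv_inv] using h

theorem analyticAt_digamma {z : ℂ} (hz : Gamma z ≠ 0) : AnalyticAt ℂ digamma z :=
  (analyticAt_Gamma hz).deriv.div (analyticAt_Gamma hz) hz

theorem logDeriv_two_cpow_one_sub_two_mul (z : ℂ) :
    logDeriv (fun z : ℂ => (2 : ℂ) ^ (1 - 2 * z)) z = -2 * log 2 := by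
  have h := (((hasDerivAt_id' z).const_mul (2 : ℂ)).const_sub 1).const_cpow (c := 2)
    (.inl two_ne_zero)
  rw [logDeriv_apply, h.deriv, mul_div_right_comm, mul_div_right_comm, div_self (by simp)]
  ring

theorem digamma_add_digamma_add_half {z : ℂ} (hz : ∀ m : ℕ, 2 * z ≠ -m) :
    digamma z + digamma (z + 1 / 2) = 2 * digamma (2 * z) - 2 * log 2 := by
  have h₁ : ∀ m : ℕ, z ≠ -m := fun m h => hz (2 * m) (by rw [h]; push_cast; ring)
  have h₂ : ∀ m : ℕ, z + 1 / 2 ≠ -m := fun m h =>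
    hz (2 * m + 1) (by rw [eq_sub_of_add_eq h]; push_cast; ring)
  have key := congrArg (logDeriv · z) (funext Gamma_mul_Gamma_add_half)
  rw [logDeriv_mul z (Gamma_ne_zero h₁) (Gamma_ne_zero (s := z + 1 / 2) h₂)
      (differentiableAt_Gamma _ h₁) (by fun_prop),
    logDeriv_mul_const _ _ (ofReal_ne_zero.mpr (Real.sqrt_pos.mpr Real.pi_pos).ne'),
    logDeriv_mul z (Gamma_ne_zero (s := 2 * z) hz) (by simp) (by fun_prop) (by fun_prop),
    logDeriv_comp_apply (f := Gamma) (g := (· + 1 / 2)) (differentiableAt_Gamma _ h₂)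
      (by fun_prop),
    logDeriv_comp_apply (f := Gamma) (g := (2 * ·)) (differentiableAt_Gamma _ hz) (by fun_prop),
    logDeriv_two_cpow_one_sub_two_mul] at key
  simp only [← digamma_def, deriv_add_const, deriv_id'', deriv_const_mul_id, mul_one] at key
  linear_combination key

theorem digamma_sub_digamma_one_sub {z : ℂ} (hz : ∀ n : ℤ, z ≠ n) :
    digamma z - digamma (1 - z) = -π * cot (π * z) := by
  have h₁ : ∀ m : ℕ, z ≠ -m := fun m => by exact_mod_cast hz (-m)
  have h₂ : ∀ m : ℕ, 1 - z ≠ -m := fun m h => hz (1 + m) (by push_cast; linear_combination -h)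
  have hsin : sin (π * z) ≠ 0 := by
    rw [Ne, sin_eq_zero_iff]
    rintro ⟨n, hn⟩
    exact hz n (mul_left_cancel₀ (ofReal_ne_zero.mpr Real.pi_ne_zero) (by rw [hn]; ring))
  have key := congrArg (logDeriv · z) (funext Gamma_mul_Gamma_one_sub)
  rw [logDeriv_mul z (Gamma_ne_zero h₁) (Gamma_ne_zero (s := 1 - z) h₂)
      (differentiableAt_Gamma _ h₁) (by fun_prop),
    logDeriv_div z (ofReal_ne_zero.mpr Real.pi_ne_zero) hsin (differentiableAt_const _)
      (by fun_prop), logDeriv_const,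
    logDeriv_comp_apply (f := Gamma) (g := (1 - ·)) (differentiableAt_Gamma _ h₂) (by fun_prop),
    logDeriv_comp_apply (f := sin) (g := (π * ·)) differentiableAt_sin (by fun_prop),
    logDeriv_sin] at key
  simp only [← digamma_def, deriv_const_sub_id, deriv_const_mul_id, Pi.zero_apply] at key
  linear_combination key

end Complex

theorem digamma_eq_complexDigamma : _root_.digamma = Complex.digamma := rfl

noncomputable def Wext (s : ℂ) : ℂ :=
  -2 * Real.eulerMascheroniConstant - 2 * log 2 - Complex.digamma (s / 4 + 1 / 2)
    - Complex.digamma (1 - s / 4)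

theorem Wfun_eq_Wext {s : ℂ} (h₄ : ∀ n : ℤ, s / 4 ≠ n) (h₂ : ∀ m : ℕ, s / 2 ≠ -m) :
    Wfun s = Wext s := by
  have hs : 2 * (s / 4) = s / 2 := by ring
  have hdup := Complex.digamma_add_digamma_add_half (z := s / 4) (by rwa [hs])
  have hrefl := Complex.digamma_sub_digamma_one_sub h₄
  rw [hs] at hdup
  rw [Wfun, Wext, digamma_eq_complexDigamma, mul_div_assoc]
  linear_combination hdup - hrefl

theorem Wfun_eq_Wext_of_mem_strip {s : ℂ} (h₁ : -2 < s.re) (h₂ : s.re < 4) (h₀ : s ≠ 0) :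
    Wfun s = Wext s := by
  refine Wfun_eq_Wext (fun n hn => h₀ ?_) (fun m hm => h₀ ?_)
  · have hs : s = 4 * n := by linear_combination 4 * hn
    have hre : s.re = 4 * n := by simp [hs]
    have hn0 : n = 0 := by
      have : -1 < n := by exact_mod_cast (by linarith : (-1 : ℝ) < n)
      have : n < 1 := by exact_mod_cast (by linarith : (n : ℝ) < 1)
      omega
    simp [hs, hn0]
  · have hs : s = -(2 * m) := by linear_combination 2 * hm
    have hre : s.re = -(2 * m) := by simp [hs]
    have hm0 : m = 0 := by
      have : m < 1 := by exact_mod_cast (by linarith : (m : ℝ) < 1)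
      omega
    simp [hs, hm0]

theorem analyticOnNhd_Wext : AnalyticOnNhd ℂ Wext {s | -2 < s.re ∧ s.re < 4} := by
  rintro s ⟨h₁, h₂⟩
  have hre₁ : 0 < (s / 4 + 1 / 2).re := by
    simp only [add_re, div_ofNat_re, one_re]; linarith
  have hre₂ : 0 < (1 - s / 4).re := by
    simp only [sub_re, one_re, div_ofNat_re]; linarith
  have a₁ := (Complex.analyticAt_digamma (Complex.Gamma_ne_zero_of_re_pos hre₁)).comp
    (f := (· / 4 + 1 / 2)) (by fun_prop)
  have a₂ := (Complex.analyticAt_digamma (Complex.Gamma_ne_zero_of_re_pos hre₂)).comp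
    (f := (1 - · / 4)) (by fun_prop)
  exact (analyticAt_const.sub a₁).sub a₂

theorem Wext_zero : Wext 0 = 0 := by
  norm_num [Wext, Complex.digamma_one, Complex.digamma_one_half]
  ring

theorem Wext_two : Wext 2 = 0 := by
  norm_num [Wext, Complex.digamma_one, Complex.digamma_one_half]
  ring

/-- the function `s ↦ −2γ_e − 2ψ(s/2) − π·cot(πs/4)` extends to an analytic
function `W` on the strip `{−2 < Re s < 4}` (its singularity at `s = 0` is removable),
and this extension satisfies `W(0) = 0` and `W(2) = 0`. -/
theorem stmt0 :
    ∃ W : ℂ → ℂ,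
      AnalyticOnNhd ℂ W {s : ℂ | -2 < s.re ∧ s.re < 4} ∧
      (∀ s : ℂ, -2 < s.re → s.re < 4 → s ≠ 0 → W s = Wfun s) ∧
      W 0 = 0 ∧ W 2 = 0 :=
  ⟨Wext, analyticOnNhd_Wext, fun _ h₁ h₂ h₀ => (Wfun_eq_Wext_of_mem_strip h₁ h₂ h₀).symm,
    Wext_zero, Wext_two⟩
end

section
/- For all real numbers 0 < z < x one has ∫₀^z K(x,y) dy = −(1/(2x))·log(1 − z⁴/x⁴), and for all real numbers 0 < x < z the integral ∫_z^∞ K(x,y) dy converges and equals (1/(2x))·log((z² + x²)/(z² − x²)). -/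
open MeasureTheory Set

/-- The kernel `K(x,y) = (1/|x² − y²| − 1/(x² + y²))·(y/x)`. -/
noncomputable def Kker (x y : ℝ) : ℝ :=
  (1 / |x ^ 2 - y ^ 2| - 1 / (x ^ 2 + y ^ 2)) * (y / x)

/-!
Both formulas come from explicit primitives of `y ↦ K(x,y)`: on `y² < x²` the kernel equals
`2y³ / (x (x⁴ − y⁴))`, the derivative of `−(1/(2x)) log(x⁴ − y⁴)`, and on `y² > x²` it equals
`(1/(2x)) (2y/(y² − x²) − 2y/(y² + x²))`, the derivative of
`(1/(2x)) (log(y² − x²) − log(y² + x²))`, which tends to `0` at infinity.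
Since `|x² − y²| ≤ x² + y²`, the kernel is nonnegative, so the fundamental theorem of calculus
for nonnegative derivatives yields integrability for free.
-/

theorem integral_Ioo_eq_sub_of_hasDerivAt_of_nonneg {g g' : ℝ → ℝ} {a b : ℝ} (hab : a ≤ b)
    (hderiv : ∀ x ∈ Icc a b, HasDerivAt g (g' x) x) (hpos : ∀ x ∈ Ioo a b, 0 ≤ g' x) :
    ∫ x in Ioo a b, g' x = g b - g a := by
  have hcont : ContinuousOn g (Icc a b) := fun x hx =>
    (hderiv x hx).continuousAt.continuousWithinAt
  have hderiv' : ∀ x ∈ Ioo a b, HasDerivAt g (g' x) x := fun x hx =>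
    hderiv x (Ioo_subset_Icc_self hx)
  have hint : IntervalIntegrable g' volume a b :=
    (intervalIntegrable_iff_integrableOn_Ioc_of_le hab).2
      (intervalIntegral.integrableOn_deriv_of_nonneg hcont hderiv' hpos)
  rw [← integral_Ioc_eq_integral_Ioo, ← intervalIntegral.integral_of_le hab]
  exact intervalIntegral.integral_eq_sub_of_hasDerivAt_of_le hab hcont hderiv' hint

theorem tendsto_log_sq_sub_sub_log_sq_add (c : ℝ) :
    Filter.Tendsto (fun y : ℝ => Real.log (y ^ 2 - c) - Real.log (y ^ 2 + c))
      Filter.atTop (nhds 0) := by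
  have h := ((Real.tendsto_log_comp_add_sub_log (-c)).sub
    (Real.tendsto_log_comp_add_sub_log c)).comp (Filter.tendsto_pow_atTop two_ne_zero)
  simpa [Function.comp_def, sub_eq_add_neg] using h

theorem Kker_nonneg {x y : ℝ} (hx : 0 < x) (hy : 0 ≤ y) (hxy : y ≠ x) : 0 ≤ Kker x y := by
  have hsq : 0 < |x ^ 2 - y ^ 2| := abs_pos.2 fun h => hxy <| by
    nlinarith [sq_nonneg (x - y)]
  have habs : |x ^ 2 - y ^ 2| ≤ x ^ 2 + y ^ 2 :=
    abs_sub_le_iff.2 ⟨by nlinarith [sq_nonneg y], by nlinarith [sq_nonneg x]⟩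
  exact mul_nonneg (sub_nonneg.2 (one_div_le_one_div_of_le hsq habs)) (div_nonneg hy hx.le)

theorem hasDerivAt_Kker_primitive_of_sq_lt {x y : ℝ} (hx : x ≠ 0) (hy : y ^ 2 < x ^ 2) :
    HasDerivAt (fun y : ℝ => -(1 / (2 * x)) * Real.log (x ^ 4 - y ^ 4)) (Kker x y) y := by
  have hdiff : 0 < x ^ 2 - y ^ 2 := sub_pos.2 hy
  have hsum : 0 < x ^ 2 + y ^ 2 := by positivity
  have hfac : x ^ 4 - y ^ 4 = (x ^ 2 - y ^ 2) * (x ^ 2 + y ^ 2) := by ring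
  have hlog := ((hasDerivAt_pow 4 y).const_sub (x ^ 4)).log
    (by rw [hfac]; exact (mul_pos hdiff hsum).ne')
  refine (hlog.const_mul _).congr_deriv ?_
  rw [Kker, abs_of_pos hdiff, hfac]
  field_simp
  ring

theorem hasDerivAt_Kker_primitive_of_sq_gt {x y : ℝ} (hx : x ≠ 0) (hy : x ^ 2 < y ^ 2) :
    HasDerivAt (fun y : ℝ => (1 / (2 * x)) *
      (Real.log (y ^ 2 - x ^ 2) - Real.log (y ^ 2 + x ^ 2))) (Kker x y) y := by
  have hdiff : 0 < y ^ 2 - x ^ 2 := sub_pos.2 hy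
  have hsum : 0 < y ^ 2 + x ^ 2 := by positivity
  have hlog₁ := ((hasDerivAt_pow 2 y).sub_const (x ^ 2)).log hdiff.ne'
  have hlog₂ := ((hasDerivAt_pow 2 y).add_const (x ^ 2)).log hsum.ne'
  refine ((hlog₁.sub hlog₂).const_mul _).congr_deriv ?_
  rw [Kker, abs_of_neg (by linarith : x ^ 2 - y ^ 2 < 0)]
  have : x ^ 2 - y ^ 2 ≠ 0 := by linarith
  have : x ^ 2 + y ^ 2 ≠ 0 := by positivity
  field_simp
  ring

/-- for `0 < z < x`, `∫₀^z K(x,y) dy = −(1/(2x))·log(1 − z⁴/x⁴)`; and for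
`0 < x < z` the integral `∫_z^∞ K(x,y) dy` converges and equals
`(1/(2x))·log((z² + x²)/(z² − x²))`. -/
theorem stmt5 :
    (∀ x z : ℝ, 0 < z → z < x →
      ∫ y in Set.Ioo (0 : ℝ) z, Kker x y = -(1 / (2 * x)) * Real.log (1 - z ^ 4 / x ^ 4)) ∧
    (∀ x z : ℝ, 0 < x → x < z →
      MeasureTheory.IntegrableOn (fun y => Kker x y) (Set.Ioi z) ∧
      ∫ y in Set.Ioi z, Kker x y = (1 / (2 * x)) * Real.log ((z ^ 2 + x ^ 2) / (z ^ 2 - x ^ 2))) := by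
  constructor
  · intro x z hz hzx
    have hx : 0 < x := hz.trans hzx
    rw [integral_Ioo_eq_sub_of_hasDerivAt_of_nonneg hz.le
      (fun y hy => hasDerivAt_Kker_primitive_of_sq_lt hx.ne' (by nlinarith [hy.1, hy.2]))
      (fun y hy => Kker_nonneg hx hy.1.le (hy.2.trans hzx).ne)]
    have hz4 : 0 < x ^ 4 - z ^ 4 := by nlinarith [pow_lt_pow_left₀ hzx hz.le four_ne_zero]
    rw [show 1 - z ^ 4 / x ^ 4 = (x ^ 4 - z ^ 4) / x ^ 4 by field_simp,
      Real.log_div hz4.ne' (by positivity)]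
    ring_nf
  · intro x z hx hxz
    have hderiv : ∀ y ∈ Ici z, HasDerivAt _ (Kker x y) y := fun y hy =>
      hasDerivAt_Kker_primitive_of_sq_gt hx.ne' (by nlinarith [mem_Ici.1 hy])
    have hpos : ∀ y ∈ Ioi z, 0 ≤ Kker x y := fun y hy =>
      Kker_nonneg hx (hx.trans (hxz.trans hy)).le (hxz.trans hy).ne'
    have hlim := (tendsto_log_sq_sub_sub_log_sq_add (x ^ 2)).const_mul (1 / (2 * x))
    rw [mul_zero] at hlim
    refine ⟨integrableOn_Ioi_deriv_of_nonneg' hderiv hpos hlim, ?_⟩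
    rw [integral_Ioi_of_hasDerivAt_of_nonneg' hderiv hpos hlim,
      Real.log_div (by positivity) (by nlinarith)]
    ring
end
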